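/- arXiv:2506.14037 — 2 statements merged into one kernel-verified Lean document; each statement's English description precedes it below -/
import Mathlib

section
/- For every positive integer s, the affine variety in ℂ^4 defined by x_0^{4s} + x_1^{4s}x_2 + x_2^{2s+1}x_3 + x_3^{2s+1} = 0 is smooth away from the origin; i.e., the four partial derivatives of f = x_0^{4s} + x_1^{4s}x_2 + x_2^{2s+1}x_3 + x_3^{2s+1} together with f have no common zero other than (0,0,0,0). -/
/-- Quasismoothness of X_s: the affine hypersurface
x₀^{4s} + x₁^{4s}x₂ + x₂^{2s+1}x₃ + x₃^{2s+1} = 0 in ℂ⁴ is smooth away from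
the origin: the defining equation and its four partial derivatives have no
common zero other than 0. -/
theorem stmt_14 (s : ℕ) (hs : 1 ≤ s) (x₀ x₁ x₂ x₃ : ℂ)
    (hf : x₀ ^ (4 * s) + x₁ ^ (4 * s) * x₂ + x₂ ^ (2 * s + 1) * x₃ +
      x₃ ^ (2 * s + 1) = 0)
    (h0 : (4 * s : ℂ) * x₀ ^ (4 * s - 1) = 0)
    (h1 : (4 * s : ℂ) * x₁ ^ (4 * s - 1) * x₂ = 0)
    (h2 : x₁ ^ (4 * s) + (2 * s + 1 : ℂ) * x₂ ^ (2 * s) * x₃ = 0)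
    (h3 : x₂ ^ (2 * s + 1) + (2 * s + 1 : ℂ) * x₃ ^ (2 * s) = 0) :
    x₀ = 0 ∧ x₁ = 0 ∧ x₂ = 0 ∧ x₃ = 0 := by
  have hcs : (s : ℂ) ≠ 0 := Nat.cast_ne_zero.mpr (by omega)
  have hs4 : (4 * s : ℂ) ≠ 0 := by simp [hcs]
  have hs2 : (2 * s + 1 : ℂ) ≠ 0 := by
    have : ((2 * s + 1 : ℕ) : ℂ) ≠ 0 := Nat.cast_ne_zero.mpr (by omega)
    push_cast at this
    convert this using 2 <;> ring
  have hpow : 4 * s - 1 ≠ 0 := by omega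
  have hx0 : x₀ = 0 := by
    rcases mul_eq_zero.mp h0 with h | h
    · exact absurd h hs4
    · exact pow_eq_zero_iff hpow |>.mp h
  have key2 : x₂ = 0 → x₃ = 0 ∧ x₁ = 0 := by
    intro h
    have hx3 : x₃ = 0 := by
      have hz : (2 * s + 1 : ℂ) * x₃ ^ (2 * s) = 0 := by
        simpa [h, zero_pow (by omega : 2 * s + 1 ≠ 0)] using h3
      rcases mul_eq_zero.mp hz with hz' | hz'
      · exact absurd hz' hs2
      · exact pow_eq_zero_iff (by omega : 2 * s ≠ 0) |>.mp hz'
    have hz : x₁ ^ (4 * s) = 0 := by simpa [h, hx3] using h2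
    exact ⟨hx3, pow_eq_zero_iff (by omega : 4 * s ≠ 0) |>.mp hz⟩
  rcases mul_eq_zero.mp h1 with h | hx2
  · rcases mul_eq_zero.mp h with h' | h'
    · exact absurd h' hs4
    · have hx1 : x₁ = 0 := pow_eq_zero_iff hpow |>.mp h'
      have hh : (2 * s + 1 : ℂ) * x₂ ^ (2 * s) * x₃ = 0 := by
        simpa [hx1, zero_pow (by omega : 4 * s ≠ 0)] using h2
      have hx2 : x₂ = 0 := by
        rcases mul_eq_zero.mp hh with ha | hx3
        · rcases mul_eq_zero.mp ha with hb | hb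
          · exact absurd hb hs2
          · exact pow_eq_zero_iff (by omega : 2 * s ≠ 0) |>.mp hb
        · have hz : x₂ ^ (2 * s + 1) = 0 := by
            simpa [hx3, zero_pow (by omega : 2 * s ≠ 0)] using h3
          exact pow_eq_zero_iff (by omega : 2 * s + 1 ≠ 0) |>.mp hz
      obtain ⟨h3', _⟩ := key2 hx2
      exact ⟨hx0, hx1, hx2, h3'⟩
  · obtain ⟨h3', h1'⟩ := key2 hx2
    exact ⟨hx0, h1', hx2, h3'⟩
end

section
/- Let s ≥ 1, d = 4s(2s+1)^2, and w = ((2s−1)(2s+1)^2, (2s+1)^2, (2s−1)(2s+1)^2, (2s+1)^2). For every integer t with 1 ≤ t ≤ 4s−1, let σ(t) denote the sum of the coordinates of tw, each reduced modulo d to lie in {0,…,d−1}. Then σ(t) = 2d if t is even; σ(t) = d if t is odd and t < 2s; and σ(t) = 3d if t is odd and t > 2s. In particular, exactly s values of t satisfy σ(t) = d, and for every t coprime to 4s and every odd t', σ(t·t' mod 4s) ∈ {d, 3d} whenever σ(t') = d. -/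
private lemma mod_helper (n r j : ℕ) (hr : r < n) : (r + n * j) % n = r := by
  rw [Nat.add_mul_mod_self_left, Nat.mod_eq_of_lt hr]

/-- The slice computation for X_s: with w as below and
σ(t) = Σᵢ (t·wᵢ mod d), one has σ(t) = 2d for even t, σ(t) = d for odd t < 2s,
σ(t) = 3d for odd t > 2s (for 1 ≤ t ≤ 4s−1); exactly s values of t in this
range satisfy σ(t) = d; and for t coprime to 4s and odd t' with σ(t') = d,
σ(t·t' mod 4s) ∈ {d, 3d}. -/
theorem stmt_17 (s : ℕ) (hs : 1 ≤ s) (d : ℕ) (hd : d = 4 * s * (2 * s + 1) ^ 2)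
    (w : Fin 4 → ℕ)
    (hw : w = ![(2 * s - 1) * (2 * s + 1) ^ 2, (2 * s + 1) ^ 2,
      (2 * s - 1) * (2 * s + 1) ^ 2, (2 * s + 1) ^ 2])
    (σ : ℕ → ℕ) (hσ : ∀ t, σ t = ∑ i, (t * w i) % d) :
    (∀ t, 1 ≤ t → t ≤ 4 * s - 1 →
      (Even t → σ t = 2 * d) ∧
      (Odd t → t < 2 * s → σ t = d) ∧
      (Odd t → 2 * s < t → σ t = 3 * d)) ∧
    Nat.card {t : ℕ // 1 ≤ t ∧ t ≤ 4 * s - 1 ∧ σ t = d} = s ∧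
    (∀ t t' : ℕ, Nat.Coprime t (4 * s) → Odd t' → 1 ≤ t' → t' ≤ 4 * s - 1 →
      σ t' = d → σ ((t * t') % (4 * s)) = d ∨ σ ((t * t') % (4 * s)) = 3 * d) := by
  obtain ⟨q, rfl⟩ : ∃ q, s = q + 1 := ⟨s - 1, by omega⟩
  set M := (2 * (q + 1) + 1) ^ 2 with hM
  have hdM : d = (4 * q + 4) * M := by rw [hd, hM]; ring
  have hMpos : 1 ≤ M := by rw [hM]; exact Nat.one_le_pow _ _ (by omega)
  have hdpos : 0 < d := hdM ▸ Nat.mul_pos (by omega) hMpos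
  -- reformulate σ
  have hσ2 : ∀ t, σ t = 2 * ((t * (2 * q + 1)) % (4 * q + 4)) * M
      + 2 * (t % (4 * q + 4)) * M := by
    intro t
    rw [hσ, hw, Fin.sum_univ_four]
    simp only [Matrix.cons_val_zero, Matrix.cons_val_one, Matrix.head_cons,
      Matrix.cons_val_two, Matrix.tail_cons, Matrix.cons_val_three,
      Matrix.head_fin_const]
    rw [show 2 * (q + 1) - 1 = 2 * q + 1 from by omega, hdM,
      show t * ((2 * q + 1) * M) = (t * (2 * q + 1)) * M from by ring,
      Nat.mul_mod_mul_right, Nat.mul_mod_mul_right]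
    ring
  -- key case analysis
  have key : ∀ t, 1 ≤ t → t ≤ 4 * q + 3 →
      (Even t → σ t = 2 * d) ∧
      (Odd t → t < 2 * q + 2 → σ t = d) ∧
      (Odd t → 2 * q + 2 < t → σ t = 3 * d) := by
    intro t h1 h2
    refine ⟨?_, ?_, ?_⟩
    · rintro ⟨k, hk⟩
      obtain ⟨j, hj⟩ : ∃ j, k = j + 1 := ⟨k - 1, by omega⟩
      have he : t * (2 * q + 1) = (4 * q + 2 - 2 * j) + (4 * q + 4) * j := by
        subst hk hj
        zify [show 2 * j ≤ 4 * q + 2 from by omega]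
        ring
      have hmod : (t * (2 * q + 1)) % (4 * q + 4) = 4 * q + 2 - 2 * j := by
        rw [he, mod_helper _ _ _ (by omega)]
      rw [hσ2, hmod, Nat.mod_eq_of_lt (show t < 4 * q + 4 from by omega), hdM]
      have hrt : (4 * q + 2 - 2 * j) + t = 4 * q + 4 := by omega
      calc 2 * (4 * q + 2 - 2 * j) * M + 2 * t * M
          = 2 * ((4 * q + 2 - 2 * j) + t) * M := by ring
        _ = 2 * (4 * q + 4) * M := by rw [hrt]
        _ = 2 * ((4 * q + 4) * M) := by ring
    · rintro ⟨u, hu⟩ hlt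
      have he : t * (2 * q + 1) = (2 * q + 1 - 2 * u) + (4 * q + 4) * u := by
        subst hu
        zify [show 2 * u ≤ 2 * q + 1 from by omega]
        ring
      have hmod : (t * (2 * q + 1)) % (4 * q + 4) = 2 * q + 1 - 2 * u := by
        rw [he, mod_helper _ _ _ (by omega)]
      rw [hσ2, hmod, Nat.mod_eq_of_lt (show t < 4 * q + 4 from by omega), hdM]
      have hrt : (2 * q + 1 - 2 * u) + t = 2 * q + 2 := by omega
      calc 2 * (2 * q + 1 - 2 * u) * M + 2 * t * M
          = 2 * ((2 * q + 1 - 2 * u) + t) * M := by ring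
        _ = 2 * (2 * q + 2) * M := by rw [hrt]
        _ = (4 * q + 4) * M := by ring
    · rintro ⟨u, hu⟩ hgt
      obtain ⟨v, hv⟩ : ∃ v, u = v + 1 := ⟨u - 1, by omega⟩
      have hvq : q ≤ v := by omega
      have hv2q : v ≤ 2 * q := by omega
      have he : t * (2 * q + 1) = (6 * q + 3 - 2 * v) + (4 * q + 4) * v := by
        subst hu hv
        zify [show 2 * v ≤ 6 * q + 3 from by omega]
        ring
      have hmod : (t * (2 * q + 1)) % (4 * q + 4) = 6 * q + 3 - 2 * v := by
        rw [he, mod_helper _ _ _ (by omega)]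
      rw [hσ2, hmod, Nat.mod_eq_of_lt (show t < 4 * q + 4 from by omega), hdM]
      have hrt : (6 * q + 3 - 2 * v) + t = 6 * q + 6 := by omega
      calc 2 * (6 * q + 3 - 2 * v) * M + 2 * t * M
          = 2 * ((6 * q + 3 - 2 * v) + t) * M := by ring
        _ = 2 * (6 * q + 6) * M := by rw [hrt]
        _ = 3 * ((4 * q + 4) * M) := by ring
  refine ⟨?_, ?_, ?_⟩
  · intro t h1 h2
    exact ⟨(key t h1 (by omega)).1,
      fun ho hlt => (key t h1 (by omega)).2.1 ho (by omega),
      fun ho hgt => (key t h1 (by omega)).2.2 ho (by omega)⟩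
  · -- counting
    have hset : {t : ℕ | 1 ≤ t ∧ t ≤ 4 * (q + 1) - 1 ∧ σ t = d}
        = (fun u => 2 * u + 1) '' Set.Iio (q + 1) := by
      ext t
      constructor
      · rintro ⟨h1, h2, h3⟩
        rcases Nat.even_or_odd t with he | ho
        · exfalso
          have := (key t h1 (by omega)).1 he
          omega
        · obtain ⟨u, hu⟩ := ho
          have hlt : t < 2 * q + 2 := by
            by_contra hge
            have hgt : 2 * q + 2 < t := by omega
            have := (key t h1 (by omega)).2.2 ⟨u, hu⟩ hgt
            omega
          exact ⟨u, Set.mem_Iio.mpr (by omega), show 2 * u + 1 = t from by omega⟩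
      · rintro ⟨u, hu, hut⟩
        simp only [Set.mem_Iio] at hu
        have hut' : 2 * u + 1 = t := hut
        subst hut'
        have := (key (2 * u + 1) (by omega) (by omega)).2.1 ⟨u, rfl⟩ (by omega)
        exact ⟨by omega, by omega, this⟩
    have hinj : Function.Injective (fun u : ℕ => 2 * u + 1) := by
      intro a b h
      simp only at h
      omega
    calc Nat.card {t : ℕ // 1 ≤ t ∧ t ≤ 4 * (q + 1) - 1 ∧ σ t = d}
        = ({t : ℕ | 1 ≤ t ∧ t ≤ 4 * (q + 1) - 1 ∧ σ t = d}).ncard :=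
          Nat.card_coe_set_eq _
      _ = ((fun u => 2 * u + 1) '' Set.Iio (q + 1)).ncard := by rw [hset]
      _ = (Set.Iio (q + 1)).ncard := Set.ncard_image_of_injective _ hinj
      _ = ((Finset.range (q + 1) : Finset ℕ) : Set ℕ).ncard := by
          congr 1
          ext x
          simp
      _ = (Finset.range (q + 1)).card := Set.ncard_coe_finset _
      _ = q + 1 := Finset.card_range _
  · intro t t' hco ht' h1' h2' hσt'
    -- t is odd
    have h2t : ¬ (2 ∣ t) := by
      intro h2t
      have h2s : (2 : ℕ) ∣ 4 * (q + 1) := ⟨2 * (q + 1), by ring⟩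
      have : (2 : ℕ) ∣ 1 := hco ▸ Nat.dvd_gcd h2t h2s
      omega
    have hot : Odd t := Nat.odd_iff.mpr (by omega)
    have hoN : Odd (t * t') := hot.mul ht'
    set T := (t * t') % (4 * (q + 1)) with hT
    have hTlt : T < 4 * q + 4 := by
      have := Nat.mod_lt (t * t') (show 0 < 4 * (q + 1) by omega)
      omega
    have hoT : Odd T := by
      obtain ⟨a, ha⟩ := hoN
      have hx : T + 2 * ((2 * (q + 1)) * ((t * t') / (4 * (q + 1)))) = 2 * a + 1 := by
        calc T + 2 * ((2 * (q + 1)) * ((t * t') / (4 * (q + 1))))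
            = T + (4 * (q + 1)) * ((t * t') / (4 * (q + 1))) := by ring
          _ = t * t' := Nat.mod_add_div _ _
          _ = 2 * a + 1 := ha
      obtain ⟨c2, hc2⟩ : ∃ c2, T + 2 * c2 = 2 * a + 1 := ⟨_, hx⟩
      exact Nat.odd_iff.mpr (by omega)
    have hT1 : 1 ≤ T := by
      obtain ⟨b, hb⟩ := hoT
      omega
    obtain ⟨b, hb⟩ := hoT
    rcases lt_or_gt_of_ne (show T ≠ 2 * q + 2 from by omega) with hlt | hgt
    · left
      exact (key T hT1 (by omega)).2.1 ⟨b, hb⟩ hlt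
    · right
      exact (key T hT1 (by omega)).2.2 ⟨b, hb⟩ hgt
end
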